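/- For every α ∈ (1,∞) and every η ∈ (0,1), the minimum over f ∈ ℝ of the conditional risk η·l̃^α(f) + (1-η)·l̃^α(-f) equals (α/(α-1))·(1 - (η^α + (1-η)^α)^{1/α}), attained at f = α·log(η/(1-η)). -/

import Mathlib

/-- The sigmoid function `σ(z) = 1/(1+e^{-z})`. -/
noncomputable def sigmoid (z : ℝ) : ℝ := 1 / (1 + Real.exp (-z))

/-- The margin `α`-loss for `α ∈ (1,∞)`: `l̃^α(z) = (α/(α-1))·(1 - σ(z)^{1-1/α})`. -/
noncomputable def margAlphaLoss (α : ℝ) (z : ℝ) : ℝ :=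
  (α / (α - 1)) * (1 - sigmoid z ^ (1 - 1/α))

/-! With `p = σ(f)` and `s = 1 - 1/α`, the conditional risk is
`(α/(α-1))·(1 - (η·p^s + (1-η)·(1-p)^s))`. Since `s = 1/q` for the conjugate exponent `q` of `α`,
Hölder's inequality for `(η, 1-η)` and `(p^{1/q}, (1-p)^{1/q})` bounds the bracket by
`(η^α + (1-η)^α)^{1/α}`, with equality at `p = η^α/(η^α + (1-η)^α) = σ(α·log(η/(1-η)))`. -/

open Real hiding sigmoid

lemma sigmoid_eq_real_sigmoid : sigmoid = Real.sigmoid :=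
  funext fun _ => one_div _

lemma Real.sigmoid_log_div {a b : ℝ} (ha : 0 < a) (hb : 0 < b) :
    Real.sigmoid (log (a / b)) = a / (a + b) := by
  rw [Real.sigmoid_def, ← log_inv, inv_div, exp_log (div_pos hb ha)]
  field_simp

lemma sigmoid_mul_log_div {α a b : ℝ} (ha : 0 < a) (hb : 0 < b) :
    sigmoid (α * log (a / b)) = a ^ α / (a ^ α + b ^ α) := by
  rw [← log_rpow (div_pos ha hb), div_rpow ha.le hb.le, sigmoid_eq_real_sigmoid,
    Real.sigmoid_log_div (rpow_pos_of_pos ha α) (rpow_pos_of_pos hb α)]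

lemma margAlphaLoss_conditionalRisk_eq (α η f : ℝ) :
    η * margAlphaLoss α f + (1 - η) * margAlphaLoss α (-f)
      = α / (α - 1) * (1 - (η * sigmoid f ^ (1 - 1/α)
          + (1 - η) * (1 - sigmoid f) ^ (1 - 1/α))) := by
  simp only [margAlphaLoss, sigmoid_eq_real_sigmoid, Real.sigmoid_neg]
  ring

lemma mul_add_mul_le_rpow_add_rpow_mul {p q a b x y : ℝ} (hpq : p.HolderConjugate q)
    (ha : 0 ≤ a) (hb : 0 ≤ b) (hx : 0 ≤ x) (hy : 0 ≤ y) :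
    a * x + b * y ≤ (a ^ p + b ^ p) ^ (1 / p) * (x ^ q + y ^ q) ^ (1 / q) := by
  have := inner_le_Lp_mul_Lq_of_nonneg Finset.univ hpq (f := ![a, b]) (g := ![x, y])
    (by simp [Fin.forall_fin_two, ha, hb]) (by simp [Fin.forall_fin_two, hx, hy])
  simpa [Fin.sum_univ_two] using this

lemma mul_rpow_add_mul_one_sub_rpow_le {α a b t : ℝ} (hα : 1 < α) (ha : 0 ≤ a) (hb : 0 ≤ b)
    (ht₀ : 0 ≤ t) (ht₁ : t ≤ 1) :
    a * t ^ (1 - 1 / α) + b * (1 - t) ^ (1 - 1 / α) ≤ (a ^ α + b ^ α) ^ (1 / α) := by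
  set q := conjExponent α
  have hpq : α.HolderConjugate q := .conjExponent hα
  have hs : 1 - 1 / α = 1 / q := by
    rw [one_div, one_div, ← hpq.inv_add_inv_eq_one, add_sub_cancel_left]
  have hpow (u : ℝ) (hu : 0 ≤ u) : (u ^ (1 / q)) ^ q = u := by
    rw [← rpow_mul hu, one_div_mul_cancel hpq.symm.ne_zero, rpow_one]
  have := mul_add_mul_le_rpow_add_rpow_mul hpq ha hb (rpow_nonneg ht₀ (1 / q))
    (rpow_nonneg (sub_nonneg.2 ht₁) (1 / q))
  rwa [hpow t ht₀, hpow (1 - t) (sub_nonneg.2 ht₁), add_sub_cancel, one_rpow, mul_one,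
    ← hs] at this

lemma mul_rpow_add_mul_rpow_eq {α a b : ℝ} (hα : α ≠ 0) (ha : 0 < a) (hb : 0 < b) :
    a * (a ^ α / (a ^ α + b ^ α)) ^ (1 - 1 / α) + b * (b ^ α / (a ^ α + b ^ α)) ^ (1 - 1 / α)
      = (a ^ α + b ^ α) ^ (1 / α) := by
  set S := a ^ α + b ^ α
  have hS : 0 < S := by positivity
  have key (x : ℝ) (hx : 0 < x) : x * (x ^ α / S) ^ (1 - 1 / α) = x ^ α / S ^ (1 - 1 / α) := by
    rw [div_rpow (rpow_nonneg hx.le α) hS.le, ← rpow_mul hx.le, mul_one_sub, mul_one_div_cancel hα,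
      rpow_sub_one hx.ne']
    field_simp
  rw [key a ha, key b hb, ← add_div, rpow_sub hS, rpow_one, div_div_cancel₀ hS.ne']

/-- For every `α ∈ (1,∞)` and every `η ∈ (0,1)`, the minimum over `f ∈ ℝ` of the
conditional risk `η·l̃^α(f) + (1-η)·l̃^α(-f)` equals
`(α/(α-1))·(1 - (η^α + (1-η)^α)^{1/α})`, attained at `f = α·log(η/(1-η))`. -/
theorem margAlphaLoss_min_conditional_risk
    (α : ℝ) (hα : 1 < α) (η : ℝ) (hη : η ∈ Set.Ioo (0:ℝ) 1) :
    η * margAlphaLoss α (α * Real.log (η / (1 - η)))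
        + (1 - η) * margAlphaLoss α (-(α * Real.log (η / (1 - η))))
      = (α / (α - 1)) * (1 - (η ^ α + (1 - η) ^ α) ^ (1/α)) ∧
    ∀ f : ℝ,
      η * margAlphaLoss α (α * Real.log (η / (1 - η)))
          + (1 - η) * margAlphaLoss α (-(α * Real.log (η / (1 - η))))
        ≤ η * margAlphaLoss α f + (1 - η) * margAlphaLoss α (-f) := by
  obtain ⟨hη₀, hη₁⟩ := hη
  have hη₁' : 0 < 1 - η := sub_pos.2 hη₁
  have hα₀ : α ≠ 0 := (zero_lt_one.trans hα).ne'
  have hσ := sigmoid_mul_log_div (α := α) hη₀ hη₁'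
  have hσ' : 1 - sigmoid (α * Real.log (η / (1 - η))) = (1 - η) ^ α / (η ^ α + (1 - η) ^ α) := by
    rw [hσ]
    field_simp
    ring
  have hmin : η * margAlphaLoss α (α * Real.log (η / (1 - η)))
        + (1 - η) * margAlphaLoss α (-(α * Real.log (η / (1 - η))))
      = (α / (α - 1)) * (1 - (η ^ α + (1 - η) ^ α) ^ (1/α)) := by
    rw [margAlphaLoss_conditionalRisk_eq, hσ', hσ, mul_rpow_add_mul_rpow_eq hα₀ hη₀ hη₁']
  refine ⟨hmin, fun f => ?_⟩
  rw [hmin, margAlphaLoss_conditionalRisk_eq, sigmoid_eq_real_sigmoid]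
  have hα₁ : 0 < α - 1 := sub_pos.2 hα
  gcongr
  exact mul_rpow_add_mul_one_sub_rpow_le hα hη₀.le hη₁'.le (sigmoid_nonneg f) (sigmoid_le_one f)
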